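/- Let v = (1 + i)/√2. Then for all a, b in the binary tetrahedral group 𝐓 one has re(a * v * star b) ≤ 1/√2, with equality when a = b = 1. Consequently, the distance in the orbit space of S³ under the action q ↦ a·q·b⁻¹ (a, b ∈ 𝐓) between the orbit of 1 and the orbit of v is exactly π/4, so the diameter of S³/(𝐓/𝐓; 𝐓/𝐓) is at least π/4. -/

import Mathlib

open Quaternion Real

noncomputable section

/-- The quaternion `i`. -/
def qi : ℍ[ℝ] := ⟨0, 1, 0, 0⟩
/-- The quaternion `j`. -/
def qj : ℍ[ℝ] := ⟨0, 0, 1, 0⟩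
/-- The quaternion `k`. -/
def qk : ℍ[ℝ] := ⟨0, 0, 0, 1⟩

/-- The binary tetrahedral group `𝐓 = {±1, ±i, ±j, ±k} ∪ {(±1 ± i ± j ± k)/2}`. -/
def binT : Set ℍ[ℝ] :=
  ({1, -1, qi, -qi, qj, -qj, qk, -qk} : Set ℍ[ℝ]) ∪
    {q | ∃ s₁ s₂ s₃ s₄ : ℝ, (s₁ = 1 ∨ s₁ = -1) ∧ (s₂ = 1 ∨ s₂ = -1) ∧
      (s₃ = 1 ∨ s₃ = -1) ∧ (s₄ = 1 ∨ s₄ = -1) ∧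
      q = (⟨s₁ / 2, s₂ / 2, s₃ / 2, s₄ / 2⟩ : ℍ[ℝ])}

/-- The unit quaternion `v = (1 + i)/√2`. -/
def vT : ℍ[ℝ] := ⟨1 / Real.sqrt 2, 1 / Real.sqrt 2, 0, 0⟩

/-!
Since `v = (1 + i)/√2`, we have `re (a v b⁻¹) = ⟪a (1 + i), b⟫ / √2`. For `a ∈ 𝐓` the vector
`a (1 + i)` lies in the 24-cell `{w | |wₖ| ≤ 1, ∑ |wₖ| ≤ 2}` (it is one of its vertices, a
permutation of `(±1, ±1, 0, 0)`), which is the polar body of `𝐓`: pairing it with `b ∈ 𝐓` gives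
at most `1`, by `|wₖ| ≤ 1` when `b = ±1, ±i, ±j, ±k` and by `∑ |wₖ| ≤ 2` when all `|bₖ| = 1/2`.
As `arccos` is antitone, every orbit representative is at distance at least `arccos (1/√2) = π/4`.
-/

lemma one_mem_binT : (1 : ℍ[ℝ]) ∈ binT := Or.inl (by simp)

lemma mem_binT_cases {q : ℍ[ℝ]} (hq : q ∈ binT) :
    q ∈ ({1, -1, qi, -qi, qj, -qj, qk, -qk} : Set ℍ[ℝ]) ∨
      |q.re| = 1 / 2 ∧ |q.imI| = 1 / 2 ∧ |q.imJ| = 1 / 2 ∧ |q.imK| = 1 / 2 := by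
  refine hq.imp id ?_
  rintro ⟨s₁, s₂, s₃, s₄, h₁, h₂, h₃, h₄, rfl⟩
  have abs_half : ∀ s : ℝ, (s = 1 ∨ s = -1) → |s / 2| = 1 / 2 := by
    rintro s (rfl | rfl) <;> norm_num
  exact ⟨abs_half s₁ h₁, abs_half s₂ h₂, abs_half s₃ h₃, abs_half s₄ h₄⟩

lemma re_mul_star (x y : ℍ[ℝ]) :
    (x * star y).re = x.re * y.re + x.imI * y.imI + x.imJ * y.imJ + x.imK * y.imK := by
  simp [Quaternion.re_mul]

lemma mul_one_add_qi (a : ℍ[ℝ]) :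
    a * (1 + qi) = ⟨a.re - a.imI, a.re + a.imI, a.imJ + a.imK, a.imK - a.imJ⟩ := by
  -- Unfolding `qi` exposes a bare `QuaternionAlgebra` literal on which the `ℍ[ℝ]` coordinate
  -- lemmas no longer fire, so they are applied first (or as `↓` pre-lemmas, below).
  ext <;>
    simp only [Quaternion.re_mul, Quaternion.imI_mul, Quaternion.imJ_mul, Quaternion.imK_mul,
      Quaternion.re_add, Quaternion.imI_add, Quaternion.imJ_add, Quaternion.imK_add] <;>
    simp [qi]; ring

lemma vT_eq_smul : vT = (√2)⁻¹ • (1 + qi) := by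
  ext <;>
    simp only [Quaternion.re_smul, Quaternion.imI_smul, Quaternion.imJ_smul, Quaternion.imK_smul,
      Quaternion.re_add, Quaternion.imI_add, Quaternion.imJ_add, Quaternion.imK_add] <;>
    simp [qi, vT]

lemma re_mul_vT_mul_star (a b : ℍ[ℝ]) :
    (a * vT * star b).re = (a * (1 + qi) * star b).re / √2 := by
  rw [vT_eq_smul, mul_smul_comm, smul_mul_assoc, Quaternion.re_smul, smul_eq_mul, inv_mul_eq_div]

lemma norm_vT : ‖vT‖ = 1 := by
  rw [@norm_eq_sqrt_re_inner ℝ, Quaternion.inner_self, Real.sqrt_eq_one, Quaternion.normSq_def']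
  simp only [vT, div_pow, Real.sq_sqrt zero_le_two]
  norm_num

lemma arccos_one_div_sqrt_two : arccos (1 / √2) = π / 4 := by
  rw [← sqrt_div_self', ← cos_pi_div_four, arccos_cos (by positivity) (by linarith [pi_pos])]

lemma abs_sub_add_abs_add_le {x y c : ℝ} (hx : |x| ≤ c) (hy : |y| ≤ c) :
    |x - y| + |x + y| ≤ 2 * c := by
  rcases abs_cases (x - y) with ⟨h₁, -⟩ | ⟨h₁, -⟩ <;>
    rcases abs_cases (x + y) with ⟨h₂, -⟩ | ⟨h₂, -⟩ <;>
    linarith [le_abs_self x, neg_abs_le x, le_abs_self y, neg_abs_le y]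

/-- The 24-cell polar to `binT`. -/
def polarBinT : Set ℍ[ℝ] :=
  {w | |w.re| ≤ 1 ∧ |w.imI| ≤ 1 ∧ |w.imJ| ≤ 1 ∧ |w.imK| ≤ 1 ∧
    |w.re| + |w.imI| + |w.imJ| + |w.imK| ≤ 2}

lemma mul_one_add_qi_mem_polarBinT {a : ℍ[ℝ]} (ha : a ∈ binT) : a * (1 + qi) ∈ polarBinT := by
  rw [mul_one_add_qi]
  rcases mem_binT_cases ha with ha | ⟨hr, hi, hj, hk⟩
  · simp only [Set.mem_insert_iff, Set.mem_singleton_iff] at ha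
    rcases ha with rfl | rfl | rfl | rfl | rfl | rfl | rfl | rfl <;>
      refine ⟨?_, ?_, ?_, ?_, ?_⟩ <;>
      norm_num [↓Quaternion.re_neg, ↓Quaternion.imI_neg, ↓Quaternion.imJ_neg,
        ↓Quaternion.imK_neg, qi, qj, qk]
  · have h₁ := abs_sub_add_abs_add_le hr.le hi.le
    have h₂ := abs_sub_add_abs_add_le hk.le hj.le
    rw [add_comm a.imK] at h₂
    refine ⟨?_, ?_, ?_, ?_, ?_⟩ <;> dsimp only <;>
      linarith [abs_sub a.re a.imI, abs_add_le a.re a.imI, abs_add_le a.imJ a.imK,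
        abs_sub a.imK a.imJ]

lemma re_mul_star_le_one {w b : ℍ[ℝ]} (hw : w ∈ polarBinT) (hb : b ∈ binT) :
    (w * star b).re ≤ 1 := by
  obtain ⟨hr, hi, hj, hk, hsum⟩ := hw
  rw [re_mul_star]
  rcases mem_binT_cases hb with hb | ⟨br, bi, bj, bk⟩
  · simp only [Set.mem_insert_iff, Set.mem_singleton_iff] at hb
    rcases hb with rfl | rfl | rfl | rfl | rfl | rfl | rfl | rfl <;>
      norm_num [↓Quaternion.re_neg, ↓Quaternion.imI_neg, ↓Quaternion.imJ_neg, ↓Quaternion.imK_neg,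
        qi, qj, qk] <;>
      linarith [le_abs_self w.re, neg_abs_le w.re, le_abs_self w.imI, neg_abs_le w.imI,
        le_abs_self w.imJ, neg_abs_le w.imJ, le_abs_self w.imK, neg_abs_le w.imK]
  · have le_half : ∀ u v : ℝ, |v| = 1 / 2 → u * v ≤ |u| / 2 := fun u v hv => by
      simpa [abs_mul, hv, div_eq_mul_inv] using le_abs_self (u * v)
    linarith [le_half w.re b.re br, le_half w.imI b.imI bi, le_half w.imJ b.imJ bj,
      le_half w.imK b.imK bk]

lemma re_mul_vT_mul_star_le {a b : ℍ[ℝ]} (ha : a ∈ binT) (hb : b ∈ binT) :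
    (a * vT * star b).re ≤ 1 / √2 := by
  rw [re_mul_vT_mul_star]
  gcongr
  exact re_mul_star_le_one (mul_one_add_qi_mem_polarBinT ha) hb

/-- The distance between the orbits of `x` and `y` in `S³/(𝐓/𝐓; 𝐓/𝐓)`. -/
def binTOrbitDist (x y : ℍ[ℝ]) : ℝ :=
  sInf {t | ∃ a ∈ binT, ∃ b ∈ binT, t = arccos ((a * x * star b * star y).re)}

lemma binTOrbitDist_le_pi (x y : ℍ[ℝ]) : binTOrbitDist x y ≤ π := by
  rw [binTOrbitDist]
  refine csInf_le_of_le ?_ ⟨1, one_mem_binT, 1, one_mem_binT, rfl⟩ (arccos_le_pi _)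
  exact ⟨0, by rintro _ ⟨a, -, b, -, rfl⟩; exact arccos_nonneg _⟩

lemma binTOrbitDist_vT_one : binTOrbitDist vT 1 = π / 4 := by
  simp only [binTOrbitDist, star_one, mul_one]
  refine IsLeast.csInf_eq ⟨⟨1, one_mem_binT, 1, one_mem_binT, ?_⟩, ?_⟩
  · rw [one_mul, star_one, mul_one, ← arccos_one_div_sqrt_two]
    rfl
  · rintro _ ⟨a, ha, b, hb, rfl⟩
    rw [← arccos_one_div_sqrt_two]
    exact arccos_le_arccos (re_mul_vT_mul_star_le ha hb)

/-- For `v = (1+i)/√2`: `re(a·v·b⁻¹) ≤ 1/√2` for all `a, b ∈ 𝐓`, with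
equality at `a = b = 1`; hence the distance between the orbits of `1` and `v` under the
group `(𝐓/𝐓; 𝐓/𝐓)` is exactly `π/4`, and the diameter of `S³/(𝐓/𝐓; 𝐓/𝐓)` is at least
`π/4`. -/
theorem binaryTetrahedral_product_vertex_distance :
    (∀ a ∈ binT, ∀ b ∈ binT, (a * vT * star b).re ≤ 1 / Real.sqrt 2) ∧
    ((1 : ℍ[ℝ]) * vT * star (1 : ℍ[ℝ])).re = 1 / Real.sqrt 2 ∧
    sInf {t : ℝ | ∃ a ∈ binT, ∃ b ∈ binT,
        t = Real.arccos ((a * vT * star b).re)} = π / 4 ∧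
    sSup {d : ℝ | ∃ x y : ℍ[ℝ], ‖x‖ = 1 ∧ ‖y‖ = 1 ∧
        d = sInf {t : ℝ | ∃ a ∈ binT, ∃ b ∈ binT,
          t = Real.arccos ((a * x * star b * star y).re)}} ≥ π / 4 := by
  refine ⟨fun a ha b hb => re_mul_vT_mul_star_le ha hb, ?_, ?_, ?_⟩
  · rw [one_mul, star_one, mul_one]
    rfl
  · simpa only [binTOrbitDist, star_one, mul_one] using binTOrbitDist_vT_one
  · refine le_csSup ⟨π, ?_⟩ ⟨vT, 1, norm_vT, norm_one, binTOrbitDist_vT_one.symm⟩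
    rintro _ ⟨x, y, -, -, rfl⟩
    exact binTOrbitDist_le_pi x y

end
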